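/- arXiv:1804.07316 — 4 statements merged into one kernel-verified Lean document; each statement's English description precedes it below -/
import Mathlib

section
/- For all real t > 0 and p ≥ 0, the integral ∫₀^∞ exp(-p·x - t·coth(x)) / (sinh(x))^{2+p} dx equals Γ(1+p) · e^{-t} / t^{1+p}. -/
open Real MeasureTheory Set

/-! The substitution `u = coth x - 1 = e^{-x} / sinh x`, with `du = -dx / sinh² x`, maps `(0, ∞)`
onto itself and turns the integrand into `u^p e^{-t(u+1)}`, so the integral is `e^{-t}` times the
Gamma integral `∫₀^∞ u^p e^{-tu} du = Γ(1+p) / t^{1+p}`. -/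

theorem cosh_div_sinh_eq_inv_tanh (x : ℝ) : cosh x / sinh x = (tanh x)⁻¹ := by
  rw [tanh_eq_sinh_div_cosh, inv_div]

-- Also at `0`, where `cosh 0 / sinh 0 = 0` is a junk value.
theorem injective_cosh_div_sinh : Function.Injective fun x => cosh x / sinh x := by
  intro a b h
  exact tanh_injective (inv_injective (by simpa only [cosh_div_sinh_eq_inv_tanh] using h))

theorem cosh_div_sinh_sub_one {x : ℝ} (hx : x ≠ 0) :
    cosh x / sinh x - 1 = exp (-x) / sinh x := by
  rw [div_sub_one (sinh_eq_zero.not.mpr hx), cosh_sub_sinh]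

theorem hasDerivAt_cosh_div_sinh {x : ℝ} (hx : x ≠ 0) :
    HasDerivAt (fun x => cosh x / sinh x) (-(sinh x ^ 2)⁻¹) x := by
  have hs : sinh x ≠ 0 := sinh_eq_zero.not.mpr hx
  refine ((hasDerivAt_cosh x).div (hasDerivAt_sinh x) hs).congr_deriv ?_
  rw [← sq, ← sq, cosh_sq]
  field

theorem image_cosh_div_sinh_sub_one_Ioi :
    (fun x => cosh x / sinh x - 1) '' Ioi 0 = Ioi 0 := by
  ext u
  simp only [cosh_div_sinh_eq_inv_tanh, mem_image, mem_Ioi]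
  constructor
  · rintro ⟨x, hx, rfl⟩
    have htanh : 0 < tanh x := by
      rw [tanh_eq_sinh_div_cosh]; exact div_pos (sinh_pos_iff.mpr hx) (cosh_pos x)
    exact sub_pos.mpr (one_lt_inv₀ htanh |>.mpr (tanh_lt_one x))
  · intro hu
    have hmem : (1 + u)⁻¹ ∈ Ioo 0 1 :=
      ⟨by positivity, inv_lt_one_of_one_lt₀ (by linarith)⟩
    refine ⟨artanh (1 + u)⁻¹, artanh_pos hmem, ?_⟩
    rw [tanh_artanh ⟨by linarith [hmem.1], hmem.2⟩, inv_inv]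
    ring

theorem integral_Ioi_zero_eq_integral_comp_cosh_div_sinh_sub_one
    {E : Type*} [NormedAddCommGroup E] [NormedSpace ℝ E] (g : ℝ → E) :
    ∫ u in Ioi 0, g u = ∫ x in Ioi 0, (sinh x ^ 2)⁻¹ • g (cosh x / sinh x - 1) := by
  have hderiv : ∀ x ∈ Ioi (0 : ℝ),
      HasDerivWithinAt (fun x => cosh x / sinh x - 1) (-(sinh x ^ 2)⁻¹) (Ioi 0) x :=
    fun x hx => ((hasDerivAt_cosh_div_sinh (ne_of_gt hx)).sub_const 1).hasDerivWithinAt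
  have hinj : InjOn (fun x => cosh x / sinh x - 1) (Ioi 0) :=
    fun a _ b _ h => injective_cosh_div_sinh (sub_left_injective h)
  conv_lhs => rw [← image_cosh_div_sinh_sub_one_Ioi]
  rw [integral_image_eq_integral_abs_deriv_smul measurableSet_Ioi hderiv hinj]
  simp only [abs_neg, abs_inv, abs_pow, sq_abs]

theorem integral_rpow_mul_exp_neg_mul_add_one_Ioi {p t : ℝ} (hp : -1 < p) (ht : 0 < t) :
    ∫ u in Ioi 0, u ^ p * exp (-(t * (u + 1)))
      = Gamma (1 + p) * exp (-t) / t ^ (1 + p) := by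
  have hshift : ∀ u : ℝ,
      u ^ p * exp (-(t * (u + 1))) = exp (-t) * (u ^ (1 + p - 1) * exp (-(t * u))) := by
    intro u
    rw [add_sub_cancel_left, mul_add, mul_one, neg_add, exp_add]
    ring
  simp only [hshift, integral_const_mul]
  rw [integral_rpow_mul_exp_neg_mul_Ioi (by linarith) ht, one_div, inv_rpow ht.le]
  field

theorem besq_coth_integrand_eq {t p x : ℝ} (hx : 0 < x) :
    exp (-p * x - t * (cosh x / sinh x)) / sinh x ^ (2 + p)
      = (sinh x ^ 2)⁻¹ *
        ((cosh x / sinh x - 1) ^ p * exp (-(t * (cosh x / sinh x - 1 + 1)))) := by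
  have hs : 0 < sinh x := sinh_pos_iff.mpr hx
  rw [sub_add_cancel, cosh_div_sinh_sub_one hx.ne', div_rpow (exp_nonneg _) hs.le, ← exp_mul,
    rpow_add hs, rpow_two, sub_eq_add_neg, exp_add]
  field_simp

/-- For all real `t > 0` and `p ≥ 0`,
`∫₀^∞ exp(-p·x - t·coth(x)) / (sinh x)^(2+p) dx = Γ(1+p) · e^{-t} / t^(1+p)`,
where `coth x = cosh x / sinh x`. -/
theorem besq_coth_integral (t p : ℝ) (ht : 0 < t) (hp : 0 ≤ p) :
    ∫ x in Set.Ioi (0 : ℝ),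
        Real.exp (-p * x - t * (Real.cosh x / Real.sinh x)) / (Real.sinh x) ^ (2 + p)
      = Real.Gamma (1 + p) * Real.exp (-t) / t ^ (1 + p) := by
  rw [setIntegral_congr_fun measurableSet_Ioi fun x hx => besq_coth_integrand_eq hx,
    ← integral_rpow_mul_exp_neg_mul_add_one_Ioi (by linarith) ht]
  exact (integral_Ioi_zero_eq_integral_comp_cosh_div_sinh_sub_one
    fun u => u ^ p * exp (-(t * (u + 1)))).symm
end

section
/- For all real a > 0, b > 0 and q > 0, ∫₀¹ (1 + a(1-u))^{q-1} / (1 + b·u)^{q+1} du = ((1+a)^q - (1+b)^{-q}) / ((a + a·b + b)·q). -/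
/-! The integrand is an exact derivative: the Möbius map `r(u) = (1 + a(1-u)) / (1 + bu)` has
`r' = -(a + ab + b) / (1 + bu)²`, so `d/du r(u)^q = -(a + ab + b) q (1 + a(1-u))^(q-1) / (1 + bu)^(q+1)`,
and the integral is `(r(0)^q - r(1)^q) / ((a + ab + b) q)` with `r(0) = 1 + a`, `r(1) = (1 + b)⁻¹`. -/

open Real Set intervalIntegral

section

variable {a b u : ℝ}

theorem hasDerivAt_moebius (hD : 1 + b * u ≠ 0) :
    HasDerivAt (fun u => (1 + a * (1 - u)) / (1 + b * u))
      (-(a + a * b + b) / (1 + b * u) ^ 2) u := by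
  have hN : HasDerivAt (fun u : ℝ => 1 + a * (1 - u)) (-a) u := by
    simpa using (((hasDerivAt_id u).const_sub 1).const_mul a).const_add 1
  have hD' : HasDerivAt (fun u : ℝ => 1 + b * u) b u := by
    simpa using ((hasDerivAt_id u).const_mul b).const_add 1
  exact (hN.div hD' hD).congr_deriv (by ring)

theorem hasDerivAt_moebius_rpow (q : ℝ) (hN : 0 < 1 + a * (1 - u)) (hD : 0 < 1 + b * u) :
    HasDerivAt (fun u => ((1 + a * (1 - u)) / (1 + b * u)) ^ q)
      (-((a + a * b + b) * q) * ((1 + a * (1 - u)) ^ (q - 1) / (1 + b * u) ^ (q + 1))) u := by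
  convert (hasDerivAt_moebius (a := a) hD.ne').rpow_const (p := q) (Or.inl (div_pos hN hD).ne')
    using 1
  have hD2 : (1 + b * u) ^ (q + 1) = (1 + b * u) ^ (q - 1) * (1 + b * u) ^ 2 := by
    rw [← rpow_natCast, ← rpow_add hD]
    ring_nf
  rw [div_rpow hN.le hD.le, hD2]
  have hDq : (1 + b * u) ^ (q - 1) ≠ 0 := (rpow_pos_of_pos hD _).ne'
  field_simp

theorem one_add_mul_one_sub_pos (ha : -1 < a) (hu : u ∈ Icc (0 : ℝ) 1) :
    0 < 1 + a * (1 - u) := by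
  rcases le_total 0 a with h | h <;> nlinarith [hu.1, hu.2]

theorem one_add_mul_pos (hb : -1 < b) (hu : u ∈ Icc (0 : ℝ) 1) : 0 < 1 + b * u := by
  rcases le_total 0 b with h | h <;> nlinarith [hu.1, hu.2]

theorem integral_moebius_rpow (ha : -1 < a) (hb : -1 < b) {q : ℝ} (hq : q ≠ 0)
    (hc : a + a * b + b ≠ 0) :
    ∫ u in (0 : ℝ)..1, (1 + a * (1 - u)) ^ (q - 1) / (1 + b * u) ^ (q + 1)
      = ((1 + a) ^ q - (1 + b) ^ (-q)) / ((a + a * b + b) * q) := by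
  have hI : uIcc (0 : ℝ) 1 = Icc 0 1 := uIcc_of_le zero_le_one
  have hderiv : ∀ u ∈ uIcc (0 : ℝ) 1,
      HasDerivAt (fun u => -((1 + a * (1 - u)) / (1 + b * u)) ^ q / ((a + a * b + b) * q))
        ((1 + a * (1 - u)) ^ (q - 1) / (1 + b * u) ^ (q + 1)) u := by
    intro u hu
    rw [hI] at hu
    exact (((hasDerivAt_moebius_rpow q (one_add_mul_one_sub_pos ha hu)
      (one_add_mul_pos hb hu)).neg).div_const _).congr_deriv
        (by rw [neg_mul, neg_neg, mul_div_cancel_left₀ _ (mul_ne_zero hc hq)])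
  have hcont : ContinuousOn (fun u => (1 + a * (1 - u)) ^ (q - 1) / (1 + b * u) ^ (q + 1))
      (uIcc 0 1) := by
    rw [hI]
    refine ContinuousOn.div ?_ ?_ fun u hu => (rpow_pos_of_pos (one_add_mul_pos hb hu) _).ne'
    · exact ContinuousOn.rpow_const (by fun_prop)
        fun u hu => Or.inl (one_add_mul_one_sub_pos ha hu).ne'
    · exact ContinuousOn.rpow_const (by fun_prop) fun u hu => Or.inl (one_add_mul_pos hb hu).ne'
  rw [integral_eq_sub_of_hasDerivAt hderiv hcont.intervalIntegrable]
  have h1b : (1 + b) ^ (-q) = (1 + b)⁻¹ ^ q := by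
    rw [inv_rpow (by linarith), rpow_neg (by linarith)]
  simp only [sub_self, mul_zero, add_zero, mul_one, one_div, sub_zero, div_one, h1b]
  ring

end

/-- For `a, b, q > 0`,
`∫₀¹ (1+a(1-u))^{q-1}/(1+bu)^{q+1} du = ((1+a)^q - (1+b)^{-q}) / ((a+ab+b)q)`. -/
theorem integral_unit_interval_rpow (a b q : ℝ) (ha : 0 < a) (hb : 0 < b) (hq : 0 < q) :
    ∫ u in (0:ℝ)..1, (1 + a * (1 - u)) ^ (q - 1) / (1 + b * u) ^ (q + 1)
      = ((1 + a) ^ q - (1 + b) ^ (-q)) / ((a + a * b + b) * q) :=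
  integral_moebius_rpow (by linarith) (by linarith) hq.ne' (by positivity)
end

section
/- For λ > 0, μ > 0, x > 0, δ ≥ 0, with a = 2λx, b = 2μx and q = 1 + δ/2, one has 1/((2μx+1)^{1+δ/2}) · 1/(1 + λ(2μx+1)/μ) · 1/((1+2λx)^{δ/2}) + ((δ+2)μx/(1+2λx)^{δ/2}) · ((1+a)^q - (1+b)^{-q})/((a+ab+b)·q) = (2λx+1)μ/((2λx+1)μ + λ). -/
/-- For `λ, μ, x > 0` and `δ ≥ 0`, with `a = 2λx`, `b = 2μx`, `q = 1 + δ/2`: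
`1/(2μx+1)^{1+δ/2} · 1/(1+λ(2μx+1)/μ) · 1/(1+2λx)^{δ/2}`
`+ ((δ+2)μx/(1+2λx)^{δ/2}) · ((1+a)^q - (1+b)^{-q})/((a+ab+b)q)`
`= (2λx+1)μ/((2λx+1)μ+λ)`. -/
theorem laplace_identity_additivity (lam mu x δ : ℝ) (hlam : 0 < lam) (hmu : 0 < mu)
    (hx : 0 < x) (hδ : 0 ≤ δ) :
    let a := 2 * lam * x
    let b := 2 * mu * x
    let q := 1 + δ / 2
    1 / (2 * mu * x + 1) ^ (1 + δ / 2) * (1 / (1 + lam * (2 * mu * x + 1) / mu))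
        * (1 / (1 + 2 * lam * x) ^ (δ / 2))
      + ((δ + 2) * mu * x / (1 + 2 * lam * x) ^ (δ / 2))
        * (((1 + a) ^ q - (1 + b) ^ (-q)) / ((a + a * b + b) * q))
      = (2 * lam * x + 1) * mu / ((2 * lam * x + 1) * mu + lam) := by
  intro a b q
  have ha : (0:ℝ) < 1 + a := by positivity
  have hb : (0:ℝ) < 1 + b := by positivity
  have hb' : (0:ℝ) < 2 * mu * x + 1 := by positivity
  have hA : (0:ℝ) < (1 + 2 * lam * x) ^ (δ / 2) := Real.rpow_pos_of_pos (by positivity) _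
  have hB : (0:ℝ) < (2 * mu * x + 1) ^ (δ / 2) := Real.rpow_pos_of_pos hb' _
  have haA : (1 + 2 * lam * x) = (1 + a) := by ring
  have e1 : (2 * mu * x + 1) ^ (1 + δ / 2)
      = (2 * mu * x + 1) * (2 * mu * x + 1) ^ (δ / 2) := by
    rw [Real.rpow_add hb', Real.rpow_one]
  have e2 : (1 + a) ^ q = (1 + a) * (1 + 2 * lam * x) ^ (δ / 2) := by
    rw [show q = 1 + δ/2 from rfl, Real.rpow_add ha, Real.rpow_one, haA]
  have e3 : (1 + b) ^ (-q) = ((2 * mu * x + 1) * (2 * mu * x + 1) ^ (δ / 2))⁻¹ := by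
    rw [Real.rpow_neg hb.le, show q = 1 + δ/2 from rfl, Real.rpow_add hb, Real.rpow_one,
      show (1 + b : ℝ) = 2 * mu * x + 1 by ring]
  have hq : (0:ℝ) < q := by show (0:ℝ) < 1 + δ/2; positivity
  have hab : a + a * b + b = 2 * x * (lam * (2 * mu * x + 1) + mu) := by
    show 2*lam*x + (2*lam*x)*(2*mu*x) + 2*mu*x = _; ring
  have hδ2 : δ + 2 = 2 * q := by show δ + 2 = 2 * (1 + δ/2); ring
  rw [e1, e2, e3, hab, hδ2]
  have h1 : lam * (2 * mu * x + 1) + mu > 0 := by positivity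
  have h2 : (2 * lam * x + 1) * mu + lam > 0 := by positivity
  field_simp
  ring
end

section
/- The identification of Laplace transforms: for all λ > 0, μ > 0, x > 0 and δ ≥ 0, ∫₀^x ((δ+2)μ/(2μm+1)^{2+δ/2}) · ((1+2(x-m)λ)/(1+2λx))^{δ/2} dm = ((2λx+1)μ/((2λx+1)μ+λ)) - 1/((2μx+1)^{1+δ/2}·(1+λ(2μx+1)/μ)·(1+2λx)^{δ/2}). -/
/-!
With `W m = (1 + 2λ(x - m)) / (1 + 2μm)` one has `W' = -2(λ + μ + 2λμx) / (1 + 2μm)²`, with a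
constant numerator, so the integrand is a constant multiple of `(1 + δ/2) W^{δ/2} W'`, the
derivative of `W^{1 + δ/2}`. The integral is therefore the difference of `W^{1 + δ/2}` at the
endpoints, where `W 0 = 1 + 2λx` and `W x = 1 / (1 + 2μx)`.
-/

open Set intervalIntegral

theorem hasDerivAt_linear_fractional (a b c d t : ℝ) (h : c * t + d ≠ 0) :
    HasDerivAt (fun t => (a * t + b) / (c * t + d)) ((a * d - b * c) / (c * t + d) ^ 2) t := by
  have hnum := ((hasDerivAt_id' t).const_mul a).add_const b
  have hden := ((hasDerivAt_id' t).const_mul c).add_const d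
  exact (hnum.div hden h).congr_deriv (by ring)

theorem integral_mul_rpow_mul_deriv {W W' : ℝ → ℝ} {a b : ℝ} (s : ℝ)
    (hW : ∀ t ∈ uIcc a b, HasDerivAt W (W' t) t) (hW' : ContinuousOn W' (uIcc a b))
    (hpos : ∀ t ∈ uIcc a b, 0 < W t) :
    ∫ t in a..b, (s + 1) * W t ^ s * W' t = W b ^ (s + 1) - W a ^ (s + 1) := by
  have hWc : ContinuousOn W (uIcc a b) := fun t ht => (hW t ht).continuousAt.continuousWithinAt
  refine integral_eq_sub_of_hasDerivAt (f := fun t => W t ^ (s + 1)) (fun t ht => ?_) ?_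
  · refine ((hW t ht).rpow_const (p := s + 1) (Or.inl (hpos t ht).ne')).congr_deriv ?_
    rw [add_sub_cancel_right]
    ring
  · exact ((continuousOn_const.mul (hWc.rpow_const fun t ht => Or.inl (hpos t ht).ne')).mul
      hW').intervalIntegrable

theorem laplace_integrand_eq (lam mu x δ m : ℝ) (hlam : 0 < lam) (hmu : 0 < mu)
    (hm : m ∈ Icc 0 x) :
    (δ + 2) * mu / (2 * mu * m + 1) ^ (2 + δ / 2)
        * ((1 + 2 * (x - m) * lam) / (1 + 2 * lam * x)) ^ (δ / 2)
      = -(mu / ((lam + mu + 2 * lam * mu * x) * (1 + 2 * lam * x) ^ (δ / 2)))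
        * ((δ / 2 + 1) * ((-2 * lam * m + (1 + 2 * lam * x)) / (2 * mu * m + 1)) ^ (δ / 2)
          * ((-2 * lam * 1 - (1 + 2 * lam * x) * (2 * mu)) / (2 * mu * m + 1) ^ 2)) := by
  obtain ⟨hm0, hmx⟩ := hm
  have hu : 0 < -2 * lam * m + (1 + 2 * lam * x) := by nlinarith
  have hv : 0 < 2 * mu * m + 1 := by positivity
  have hD : 0 < 1 + 2 * lam * x := by nlinarith
  have hP : 0 < lam + mu + 2 * lam * mu * x := by nlinarith [mul_pos hlam hmu]
  rw [show δ + 2 = 2 * (δ / 2) + 2 by ring,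
    show 1 + 2 * (x - m) * lam = -2 * lam * m + (1 + 2 * lam * x) by ring,
    Real.div_rpow hu.le hD.le, Real.div_rpow hu.le hv.le, Real.rpow_add hv, Real.rpow_two,
    show -2 * lam * 1 - (1 + 2 * lam * x) * (2 * mu) = -2 * (lam + mu + 2 * lam * mu * x) by ring]
  have := Real.rpow_pos_of_pos hD (δ / 2)
  have := Real.rpow_pos_of_pos hv (δ / 2)
  generalize lam + mu + 2 * lam * mu * x = P at hP ⊢
  field_simp

theorem laplace_boundary_terms_eq (lam mu x s : ℝ) (hlam : 0 < lam) (hmu : 0 < mu)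
    (hx : 0 < x) :
    -(mu / ((lam + mu + 2 * lam * mu * x) * (1 + 2 * lam * x) ^ s))
        * ((2 * mu * x + 1)⁻¹ ^ (s + 1) - (1 + 2 * lam * x) ^ (s + 1))
      = (2 * lam * x + 1) * mu / ((2 * lam * x + 1) * mu + lam)
          - 1 / ((2 * mu * x + 1) ^ (1 + s) * (1 + lam * (2 * mu * x + 1) / mu)
              * (1 + 2 * lam * x) ^ s) := by
  have hv : 0 < 2 * mu * x + 1 := by positivity
  have hD : 0 < 1 + 2 * lam * x := by positivity
  have hP : 0 < lam + mu + 2 * lam * mu * x := by positivity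
  rw [Real.inv_rpow hv.le, Real.rpow_add_one hD.ne', add_comm s 1,
    show (2 * lam * x + 1) * mu + lam = lam + mu + 2 * lam * mu * x by ring,
    show 2 * lam * x + 1 = 1 + 2 * lam * x by ring,
    show 1 + lam * (2 * mu * x + 1) / mu = (lam + mu + 2 * lam * mu * x) / mu by field_simp; ring]
  have := Real.rpow_pos_of_pos hD s
  have := Real.rpow_pos_of_pos hv (1 + s)
  generalize lam + mu + 2 * lam * mu * x = P at hP ⊢
  field_simp
  ring

theorem laplace_transform_integral_identity_general (lam mu x δ : ℝ) (hlam : 0 < lam)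
    (hmu : 0 < mu) (hx : 0 < x) :
    ∫ m in (0:ℝ)..x,
        ((δ + 2) * mu / (2 * mu * m + 1) ^ (2 + δ / 2))
          * ((1 + 2 * (x - m) * lam) / (1 + 2 * lam * x)) ^ (δ / 2)
      = (2 * lam * x + 1) * mu / ((2 * lam * x + 1) * mu + lam)
          - 1 / ((2 * mu * x + 1) ^ (1 + δ / 2) * (1 + lam * (2 * mu * x + 1) / mu)
              * (1 + 2 * lam * x) ^ (δ / 2)) := by
  set D := 1 + 2 * lam * x
  set W : ℝ → ℝ := fun m => (-2 * lam * m + D) / (2 * mu * m + 1)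
  have hI : uIcc 0 x = Icc 0 x := uIcc_of_le hx.le
  have hW : ∀ m ∈ uIcc 0 x,
      HasDerivAt W ((-2 * lam * 1 - D * (2 * mu)) / (2 * mu * m + 1) ^ 2) m := fun m hm =>
    hasDerivAt_linear_fractional _ _ _ _ m (by rw [hI] at hm; nlinarith [hm.1])
  have hW' : ContinuousOn (fun m => (-2 * lam * 1 - D * (2 * mu)) / (2 * mu * m + 1) ^ 2)
      (uIcc 0 x) :=
    continuousOn_const.div (by fun_prop) fun m hm => by
      rw [hI] at hm; exact pow_ne_zero 2 (by nlinarith [hm.1])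
  have hpos : ∀ m ∈ uIcc 0 x, 0 < W m := fun m hm => by
    rw [hI] at hm; exact div_pos (by nlinarith [hm.2]) (by nlinarith [hm.1])
  have hWx : W x = (2 * mu * x + 1)⁻¹ := by simp only [W, D]; field_simp; ring
  have hW0 : W 0 = D := by simp [W]
  rw [integral_congr fun m hm => laplace_integrand_eq lam mu x δ m hlam hmu (hI ▸ hm),
    integral_const_mul, integral_mul_rpow_mul_deriv (δ / 2) hW hW' hpos, hWx, hW0]
  exact laplace_boundary_terms_eq lam mu x (δ / 2) hlam hmu hx

/-- For all `λ, μ, x > 0` and `δ ≥ 0`: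
`∫₀^x ((δ+2)μ/(2μm+1)^{2+δ/2}) ((1+2(x-m)λ)/(1+2λx))^{δ/2} dm`
`= (2λx+1)μ/((2λx+1)μ+λ) - 1/((2μx+1)^{1+δ/2} (1+λ(2μx+1)/μ) (1+2λx)^{δ/2})`. -/
theorem laplace_transform_integral_identity (lam mu x δ : ℝ) (hlam : 0 < lam)
    (hmu : 0 < mu) (hx : 0 < x) (hδ : 0 ≤ δ) :
    ∫ m in (0:ℝ)..x,
        ((δ + 2) * mu / (2 * mu * m + 1) ^ (2 + δ / 2))
          * ((1 + 2 * (x - m) * lam) / (1 + 2 * lam * x)) ^ (δ / 2)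
      = (2 * lam * x + 1) * mu / ((2 * lam * x + 1) * mu + lam)
          - 1 / ((2 * mu * x + 1) ^ (1 + δ / 2) * (1 + lam * (2 * mu * x + 1) / mu)
              * (1 + 2 * lam * x) ^ (δ / 2)) :=
  laplace_transform_integral_identity_general lam mu x δ hlam hmu hx
end
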